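/- Let d ≥ 1, let z ∈ ℂ \ [0, ∞), and let R₀(z) : L²(ℝ^d) → L²(ℝ^d) be the bounded Fourier multiplier operator defined by 𝓕(R₀(z)f)(ξ) = (|ξ|² − z)^{−1} 𝓕f(ξ), where 𝓕 is the Fourier–Plancherel transform on L²(ℝ^d). Let φ₁, …, φ_N ∈ L²(ℝ^d) be an orthonormal family and P := Σ_{j=1}^N ⟨·, φ_j⟩ φ_j the orthogonal projection onto span{φ₁, …, φ_N}. If u ∈ span{φ₁, …, φ_N} satisfies u + P R₀(z) P u = 0, then u = 0; consequently, the map u ↦ u + P R₀(z) P u is a bijection of span{φ₁, …, φ_N} onto itself. -/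

import Mathlib

/-!
For `u` in the span, `⟪u, P v⟫ = ⟪u, v⟫`, so `u + P R₀(z) u = 0` gives `⟪u, u + R₀(z) u⟫ = 0`,
which on the Fourier side reads `∫ (1 + (|ξ|² - z)⁻¹) |û ξ|² dξ = 0`. For `z ∉ [0, ∞)` the weight
`1 + (|ξ|² - z)⁻¹` stays in a fixed open half-plane `{w | 0 < re (ζ w)}` (`ζ = 1` if `z < 0`,
`ζ = -i Im z` otherwise), so the real part of `ζ` times the integral is the integral of a
nonnegative function that vanishes only where `û` does; hence `û = 0`. Surjectivity is
injectivity on the finite-dimensional span.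
-/

open MeasureTheory

theorem Orthonormal.inner_sum_inner_smul_of_mem_span {𝕜 E ι : Type*} [RCLike 𝕜]
    [NormedAddCommGroup E] [InnerProductSpace 𝕜 E] [Fintype ι] {φ : ι → E}
    (hφ : Orthonormal 𝕜 φ) {u : E} (hu : u ∈ Submodule.span 𝕜 (Set.range φ)) (v : E) :
    inner 𝕜 u (∑ j, inner 𝕜 (φ j) v • φ j) = inner 𝕜 u v := by
  induction hu using Submodule.span_induction with
  | mem x hx =>
    obtain ⟨k, rfl⟩ := hx
    exact hφ.inner_right_fintype _ k
  | zero => simp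
  | add x y _ _ hx hy => rw [inner_add_left, inner_add_left, hx, hy]
  | smul a x _ hx => rw [inner_smul_left, inner_smul_left, hx]

theorem Submodule.exists_apply_eq_of_injOn {K V : Type*} [DivisionRing K] [AddCommGroup V]
    [Module K V] {W : Submodule K V} [FiniteDimensional K W] (A : V →ₗ[K] V)
    (hA : ∀ u ∈ W, A u ∈ W) (hinj : ∀ u ∈ W, A u = 0 → u = 0) :
    ∀ w ∈ W, ∃ u ∈ W, A u = w := by
  have hB : Function.Injective (A.restrict hA) := by
    refine (injective_iff_map_eq_zero _).mpr fun u hu => Subtype.ext (hinj u u.2 ?_)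
    simpa using congrArg Subtype.val hu
  intro w hw
  obtain ⟨u, hu⟩ := LinearMap.injective_iff_surjective.mp hB ⟨w, hw⟩
  exact ⟨u, u.2, congrArg Subtype.val hu⟩

section Multiplier

variable {α : Type*} [MeasurableSpace α] {μ : Measure α}

theorem ae_eq_zero_of_integral_mul_normSq_eq_zero {c F : α → ℂ} (ζ : ℂ)
    (hc : ∀ x, 0 < (ζ * c x).re) (hi : Integrable (fun x => c x * Complex.normSq (F x)) μ)
    (h0 : ∫ x, c x * Complex.normSq (F x) ∂μ = 0) : F =ᵐ[μ] 0 := by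
  have hre : (fun x => (ζ * (c x * Complex.normSq (F x))).re) =
      fun x => (ζ * c x).re * Complex.normSq (F x) := by
    ext x; rw [← mul_assoc, Complex.re_mul_ofReal]
  have hi' : Integrable (fun x => (ζ * c x).re * Complex.normSq (F x)) μ :=
    hre ▸ (hi.const_mul ζ).re
  have hint : ∫ x, (ζ * c x).re * Complex.normSq (F x) ∂μ = 0 := by
    have := integral_re (hi.const_mul ζ)
    simp only [RCLike.re_eq_complex_re, integral_const_mul, h0, mul_zero, Complex.zero_re] at this
    rwa [hre] at this
  have hnn : 0 ≤ fun x => (ζ * c x).re * Complex.normSq (F x) :=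
    fun x => mul_nonneg (hc x).le (Complex.normSq_nonneg _)
  filter_upwards [(integral_eq_zero_iff_of_nonneg hnn hi').mp hint] with x hx
  exact Complex.normSq_eq_zero.mp ((mul_eq_zero.mp hx).resolve_left (hc x).ne')

theorem MeasureTheory.Lp.eq_zero_of_inner_add_eq_zero {m : α → ℂ} (ζ : ℂ)
    (hm : ∀ x, 0 < (ζ * (1 + m x)).re) {f g : Lp ℂ 2 μ}
    (hg : g =ᵐ[μ] fun x => m x * f x) (h : inner ℂ f (f + g) = 0) : f = 0 := by
  have hae : (fun x => inner ℂ (f x) ((f + g : Lp ℂ 2 μ) x)) =ᵐ[μ]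
      fun x => (1 + m x) * Complex.normSq (f x) := by
    filter_upwards [Lp.coeFn_add f g, hg] with x hadd hgx
    rw [hadd, Pi.add_apply, hgx, RCLike.inner_apply, Complex.normSq_eq_conj_mul_self]
    ring
  refine Lp.eq_zero_iff_ae_eq_zero.mpr (ae_eq_zero_of_integral_mul_normSq_eq_zero ζ hm
    ((L2.integrable_inner f (f + g)).congr hae) ?_)
  rw [← integral_congr_ae hae, ← L2.inner_def, h]

theorem Orthonormal.eq_zero_of_add_sum_inner_smul_eq_zero {E ι : Type*}
    [NormedAddCommGroup E] [InnerProductSpace ℂ E] [Fintype ι]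
    (𝓕 : E ≃ₗᵢ[ℂ] Lp ℂ 2 μ) {φ : ι → E} (hφ : Orthonormal ℂ φ) {m : α → ℂ} (ζ : ℂ)
    (hm : ∀ x, 0 < (ζ * (1 + m x)).re) {u v : E} (hu : u ∈ Submodule.span ℂ (Set.range φ))
    (hv : (𝓕 v : α → ℂ) =ᵐ[μ] fun x => m x * 𝓕 u x)
    (heq : u + ∑ j, inner ℂ (φ j) v • φ j = 0) : u = 0 := by
  refine 𝓕.map_eq_zero_iff.mp (Lp.eq_zero_of_inner_add_eq_zero ζ hm hv ?_)
  rw [← map_add, 𝓕.inner_map_map, inner_add_right,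
    ← hφ.inner_sum_inner_smul_of_mem_span hu v, ← inner_add_right, heq, inner_zero_right]

theorem LinearIsometryEquiv.exists_multiplier {E : Type*} [NormedAddCommGroup E]
    [InnerProductSpace ℂ E] (𝓕 : E ≃ₗᵢ[ℂ] Lp ℂ 2 μ) {m : α → ℂ}
    (hm : AEStronglyMeasurable m μ) (C : ℝ) (hC : ∀ x, ‖m x‖ ≤ C) :
    ∃ R : E →ₗ[ℂ] E, ∀ u, (𝓕 (R u) : α → ℂ) =ᵐ[μ] fun x => m x * 𝓕 u x := by
  have hmLp : MemLp m ⊤ μ := memLp_top_of_bound hm C (.of_forall hC)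
  let M := (ContinuousLinearMap.mul ℂ ℂ).holderₗ μ ⊤ 2 2 (hmLp.toLp m)
  refine ⟨𝓕.symm.toLinearEquiv.toLinearMap ∘ₗ M ∘ₗ 𝓕.toLinearEquiv.toLinearMap, fun u => ?_⟩
  filter_upwards [(ContinuousLinearMap.mul ℂ ℂ).coeFn_holder (r := 2) (hmLp.toLp m) (𝓕 u),
    hmLp.coeFn_toLp] with x hM hmx
  simp [M, hM, hmx]

end Multiplier

theorem exists_re_mul_one_add_inv_sub_pos {z : ℂ} (hz : ∀ r : ℝ, 0 ≤ r → z ≠ r) :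
    ∃ ζ : ℂ, ∀ r : ℝ, 0 ≤ r → 0 < (ζ * (1 + ((r : ℂ) - z)⁻¹)).re := by
  by_cases him : z.im = 0
  · have hre : z.re < 0 := by
      by_contra! h
      exact hz z.re h (Complex.ext rfl him)
    refine ⟨1, fun r hr => ?_⟩
    have hsub : (r : ℂ) - z = ((r - z.re : ℝ) : ℂ) := Complex.ext (by simp) (by simp [him])
    rw [one_mul, hsub, ← Complex.ofReal_inv, ← Complex.ofReal_one, ← Complex.ofReal_add,
      Complex.ofReal_re]
    have : 0 < r - z.re := by linarith
    positivity
  · refine ⟨-Complex.I * z.im, fun r hr => ?_⟩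
    have hne : (r : ℂ) - z ≠ 0 := sub_ne_zero.mpr (hz r hr).symm
    have key : (-Complex.I * z.im * (1 + ((r : ℂ) - z)⁻¹)).re =
        z.im * z.im / Complex.normSq ((r : ℂ) - z) := by
      simp [Complex.mul_re, Complex.inv_im, mul_div_assoc]
    rw [key]
    exact div_pos (mul_self_pos.mpr him) (Complex.normSq_pos.mpr hne)

theorem exists_norm_inv_sub_le {z : ℂ} (hz : ∀ r : ℝ, 0 ≤ r → z ≠ r) :
    ∃ C : ℝ, ∀ r : ℝ, 0 ≤ r → ‖((r : ℂ) - z)⁻¹‖ ≤ C := by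
  set S : Set ℂ := (↑) '' Set.Ici (0 : ℝ)
  have hS : IsClosed S := Complex.isometry_ofReal.isClosedEmbedding.isClosedMap _ isClosed_Ici
  have hzS : z ∉ S := by rintro ⟨r, hr, rfl⟩; exact hz r hr rfl
  have hδ := (hS.notMem_iff_infDist_pos ⟨0, 0, Set.self_mem_Ici, by simp⟩).mp hzS
  refine ⟨(Metric.infDist z S)⁻¹, fun r hr => ?_⟩
  rw [norm_inv, ← dist_eq_norm, dist_comm]
  exact inv_anti₀ hδ (Metric.infDist_le_dist_of_mem ⟨r, hr, rfl⟩)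

theorem claim_one_injectivity (d : ℕ) (z : ℂ)
    (hz : ∀ r : ℝ, 0 ≤ r → z ≠ (r : ℂ))
    (𝓕 : Lp ℂ 2 (volume : Measure (EuclideanSpace ℝ (Fin d))) ≃ₗᵢ[ℂ]
         Lp ℂ 2 (volume : Measure (EuclideanSpace ℝ (Fin d))))
    (N : ℕ) (φ : Fin N → Lp ℂ 2 (volume : Measure (EuclideanSpace ℝ (Fin d))))
    (hφ : Orthonormal ℂ φ) :
    (∀ u v : Lp ℂ 2 (volume : Measure (EuclideanSpace ℝ (Fin d))),
      u ∈ Submodule.span ℂ (Set.range φ) →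
      ((𝓕 v : EuclideanSpace ℝ (Fin d) → ℂ) =ᵐ[volume]
        fun ξ => (((‖ξ‖ ^ 2 : ℝ) : ℂ) - z)⁻¹ * (𝓕 u : EuclideanSpace ℝ (Fin d) → ℂ) ξ) →
      u + ∑ j, (inner ℂ (φ j) v : ℂ) • φ j = 0 → u = 0) ∧
    (∀ w ∈ Submodule.span ℂ (Set.range φ),
      ∃ u ∈ Submodule.span ℂ (Set.range φ),
      ∃ v : Lp ℂ 2 (volume : Measure (EuclideanSpace ℝ (Fin d))),
        ((𝓕 v : EuclideanSpace ℝ (Fin d) → ℂ) =ᵐ[volume]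
          fun ξ => (((‖ξ‖ ^ 2 : ℝ) : ℂ) - z)⁻¹ * (𝓕 u : EuclideanSpace ℝ (Fin d) → ℂ) ξ) ∧
        u + ∑ j, (inner ℂ (φ j) v : ℂ) • φ j = w) := by
  obtain ⟨ζ, hζ⟩ := exists_re_mul_one_add_inv_sub_pos hz
  have hinj := fun u v (hu : u ∈ Submodule.span ℂ (Set.range φ)) hv =>
    hφ.eq_zero_of_add_sum_inner_smul_eq_zero 𝓕 ζ (fun ξ => hζ _ (sq_nonneg ‖ξ‖)) (v := v) hu hv
  refine ⟨hinj, fun w hw => ?_⟩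
  obtain ⟨C, hC⟩ := exists_norm_inv_sub_le hz
  obtain ⟨R₀, hR₀⟩ := 𝓕.exists_multiplier
    (m := fun ξ => (((‖ξ‖ ^ 2 : ℝ) : ℂ) - z)⁻¹) (by fun_prop) C (fun ξ => hC _ (sq_nonneg _))
  let A := LinearMap.id + (∑ j, (innerₛₗ ℂ (φ j)).smulRight (φ j)) ∘ₗ R₀
  have hA : ∀ u, A u = u + ∑ j, inner ℂ (φ j) (R₀ u) • φ j := fun u => by simp [A]
  have hA_mem : ∀ u ∈ Submodule.span ℂ (Set.range φ), A u ∈ Submodule.span ℂ (Set.range φ) :=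
    fun u hu => hA u ▸ add_mem hu (Submodule.sum_mem _ fun j _ =>
      Submodule.smul_mem _ _ (Submodule.subset_span (Set.mem_range_self j)))
  have := FiniteDimensional.span_of_finite ℂ (Set.finite_range φ)
  obtain ⟨u, hu, huw⟩ := Submodule.exists_apply_eq_of_injOn A hA_mem
    (fun u hu h => hinj u (R₀ u) hu (hR₀ u) (hA u ▸ h)) w hw
  exact ⟨u, hu, R₀ u, hR₀ u, hA u ▸ huw⟩
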